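/- arXiv:2007.10363 — 4 statements merged into one kernel-verified Lean document; each statement's English description precedes it below -/
import Mathlib

section
/- For every integer N ≥ 2, 1 − ∑_{k=0}^{N−2} √( g_k · g_{k+1} ) = ((N−1)/N) · (1 − cos(π/N)), where g_k := (2/N) sin²(π(2k+1)/(2N)). -/
/-- The distribution `g_k := (2/N) sin²(π(2k+1)/(2N))`. -/
noncomputable def sineDist (N k : ℕ) : ℝ :=
  (2 / (N : ℝ)) * Real.sin (Real.pi * (2 * (k : ℝ) + 1) / (2 * (N : ℝ))) ^ 2

open Real Finset in
lemma sum_cos_roots (N : ℕ) (hN : 2 ≤ N) :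
    ∑ j ∈ Finset.range N, Real.cos (2 * π * j / N) = 0 := by
  have hN0 : (0:ℝ) < N := by positivity
  set θ : ℝ := 2 * π / N with hθdef
  have hθpos : 0 < θ := by positivity
  have hθlt : θ < 2 * π := by
    have h2 : (2:ℝ) ≤ N := by exact_mod_cast hN
    rw [hθdef, div_lt_iff₀ hN0]
    nlinarith [Real.pi_pos, mul_nonneg Real.pi_pos.le (by linarith : (0:ℝ) ≤ (N:ℝ) - 2)]
  set z : ℂ := Complex.exp (θ * Complex.I) with hz
  have hzj : ∀ j : ℕ, z ^ j = Complex.exp ((j * θ : ℝ) * Complex.I) := by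
    intro j; rw [hz, ← Complex.exp_nat_mul]; push_cast; ring_nf
  have hre : ∀ j : ℕ, (z ^ j).re = Real.cos (j * θ) := by
    intro j; rw [hzj j, Complex.exp_ofReal_mul_I_re]
  have hzN : z ^ N = 1 := by
    rw [hzj N, show ((N : ℝ) * θ : ℝ) = 2 * π by rw [hθdef]; field_simp]
    rw [show (((2 * π : ℝ)) : ℂ) = 2 * (π:ℂ) by push_cast; ring]
    exact Complex.exp_two_pi_mul_I
  have hz1 : z ≠ 1 := by
    intro h
    have h1 : Real.cos θ = 1 := by
      have := hre 1
      rw [pow_one, h] at this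
      simpa using this.symm
    rcases Real.cos_eq_one_iff θ |>.mp h1 with ⟨n, hn⟩
    have hπ := Real.pi_pos
    have hn1 : 0 < (n : ℝ) := by nlinarith
    have hn2 : (n : ℝ) < 1 := by nlinarith
    have : 0 < n := by exact_mod_cast hn1
    have : n < 1 := by exact_mod_cast hn2
    omega
  have hsum : ∑ j ∈ Finset.range N, z ^ j = 0 := by
    rw [geom_sum_eq hz1, hzN, sub_self, zero_div]
  calc ∑ j ∈ Finset.range N, Real.cos (2 * π * j / N)
      = (∑ j ∈ Finset.range N, z ^ j).re := by
        rw [Complex.re_sum]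
        refine Finset.sum_congr rfl fun j _ => ?_
        rw [hre j, hθdef]
        ring_nf
    _ = 0 := by rw [hsum]; rfl

/-- Exact evaluation of `ε_g`: for every `N ≥ 2`,
`1 − ∑_{k=0}^{N−2} √(g_k g_{k+1}) = ((N−1)/N)(1 − cos(π/N))`. -/
theorem epsilon_g_eval (N : ℕ) (hN : 2 ≤ N) :
    1 - ∑ k ∈ Finset.range (N - 1), Real.sqrt (sineDist N k * sineDist N (k + 1))
      = (((N : ℝ) - 1) / (N : ℝ)) * (1 - Real.cos (Real.pi / (N : ℝ))) := by
  have hN0 : (0:ℝ) < N := by positivity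
  have hπ := Real.pi_pos
  -- step 1: each sqrt term
  have hterm : ∀ k ∈ Finset.range (N - 1),
      Real.sqrt (sineDist N k * sineDist N (k + 1))
        = (1 / N) * (Real.cos (Real.pi / N) - Real.cos (2 * Real.pi * (k + 1) / N)) := by
    intro k hk
    have hk' : (k : ℝ) ≤ (N : ℝ) - 2 := by
      have := Finset.mem_range.mp hk
      have : k + 2 ≤ N := by omega
      have := (Nat.cast_le (α := ℝ)).mpr this
      push_cast at this; linarith
    set a : ℝ := Real.pi * (2 * (k : ℝ) + 1) / (2 * N) with ha
    set b : ℝ := Real.pi * (2 * ((k : ℝ) + 1) + 1) / (2 * N) with hb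
    have hapos : 0 < a := by rw [ha]; positivity
    have halt : a < Real.pi := by
      rw [ha, div_lt_iff₀ (by positivity)]
      nlinarith
    have hbpos : 0 < b := by rw [hb]; positivity
    have hblt : b < Real.pi := by
      rw [hb, div_lt_iff₀ (by positivity)]
      nlinarith
    have hsa : 0 < Real.sin a := Real.sin_pos_of_pos_of_lt_pi hapos halt
    have hsb : 0 < Real.sin b := Real.sin_pos_of_pos_of_lt_pi hbpos hblt
    have : sineDist N k * sineDist N (k + 1)
        = ((2 / N) * (Real.sin a * Real.sin b)) ^ 2 := by
      simp only [sineDist, ← ha]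
      push_cast
      rw [← hb]
      ring
    rw [this, Real.sqrt_sq (by positivity)]
    have hprod : 2 * (Real.sin a * Real.sin b)
        = Real.cos (a - b) - Real.cos (a + b) := by
      rw [Real.cos_sub, Real.cos_add]; ring
    have hab1 : a - b = -(Real.pi / N) := by rw [ha, hb]; field_simp; ring
    have hab2 : a + b = 2 * Real.pi * ((k : ℝ) + 1) / N := by
      rw [ha, hb]; field_simp; ring
    have : Real.sin a * Real.sin b
        = (Real.cos (Real.pi / N) - Real.cos (2 * Real.pi * ((k : ℝ) + 1) / N)) / 2 := by
      rw [eq_div_iff (two_ne_zero), mul_comm _ (2:ℝ), hprod, hab1, hab2, Real.cos_neg]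
    rw [this]; ring
  rw [Finset.sum_congr rfl hterm]
  -- step 2: sum of cosines
  have hcos : ∑ k ∈ Finset.range (N - 1), Real.cos (2 * Real.pi * ((k:ℝ) + 1) / N) = -1 := by
    obtain ⟨M, rfl⟩ : ∃ M, N = M + 1 := ⟨N - 1, by omega⟩
    have h0 := sum_cos_roots (M + 1) hN
    rw [Finset.sum_range_succ'] at h0
    simp only [Nat.cast_zero, mul_zero, zero_div, Real.cos_zero, Nat.add_sub_cancel] at h0 ⊢
    push_cast at h0 ⊢
    linarith
  rw [← Finset.mul_sum, Finset.sum_sub_distrib, Finset.sum_const, Finset.card_range, hcos,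
    nsmul_eq_mul, Nat.cast_sub (by omega : 1 ≤ N), Nat.cast_one]
  field_simp
  ring
end

section
/- For every integer N ≥ 1, 1 − ∑_{k=0}^{N−2} √( g_k · g_{k+1} ) ≤ π²/N², where g_k := (2/N) sin²(π(2k+1)/(2N)). (Indeed the stronger bound with π²/(2N²) on the right-hand side also holds.) -/
open Real Finset

theorem Real.sum_range_cos_two_pi_mul_div {N : ℕ} (hN : 2 ≤ N) :
    ∑ j ∈ range N, cos (2 * π * j / N) = 0 := by
  have hζ := Complex.isPrimitiveRoot_exp N (by omega)
  have hsum := congrArg Complex.re (hζ.geom_sum_eq_zero (by omega))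
  rw [Complex.re_sum, Complex.zero_re] at hsum
  convert hsum using 2 with j
  rw [← Complex.exp_nat_mul, ← Complex.exp_ofReal_mul_I_re]
  push_cast
  ring_nf

theorem Real.sum_range_cos_two_pi_mul_succ_div {N : ℕ} (hN : 2 ≤ N) :
    ∑ k ∈ range (N - 1), cos (2 * π * (k + 1 : ℕ) / N) = -1 := by
  have h := sum_range_succ' (fun j => cos (2 * π * j / N)) (N - 1)
  rw [Nat.sub_add_cancel (by omega), sum_range_cos_two_pi_mul_div hN] at h
  simp only [CharP.cast_eq_zero, mul_zero, zero_div, cos_zero] at h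
  linarith

theorem sin_pi_mul_two_mul_add_one_div_nonneg {N k : ℕ} (hk : k < N) :
    0 ≤ sin (π * (2 * (k : ℝ) + 1) / (2 * N)) := by
  have hk' : (k : ℝ) + 1 ≤ N := by exact_mod_cast hk
  have hN : (0 : ℝ) < N := by linarith [k.cast_nonneg (α := ℝ)]
  apply sin_nonneg_of_nonneg_of_le_pi (by positivity)
  rw [div_le_iff₀ (by positivity)]
  nlinarith [pi_pos]

theorem sqrt_sineDist_mul_sineDist_succ {N k : ℕ} (hk : k + 1 < N) :
    √(sineDist N k * sineDist N (k + 1)) = (cos (π / N) - cos (2 * π * (k + 1 : ℕ) / N)) / N := by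
  have hN : (N : ℝ) ≠ 0 := by exact_mod_cast (by omega : N ≠ 0)
  set a := π * (2 * (k : ℝ) + 1) / (2 * N)
  set b := π * (2 * ((k + 1 : ℕ) : ℝ) + 1) / (2 * N)
  have ha := sin_pi_mul_two_mul_add_one_div_nonneg (N := N) (k := k) (by omega)
  have hb := sin_pi_mul_two_mul_add_one_div_nonneg hk
  have hprod : sineDist N k * sineDist N (k + 1) = (2 * sin b * sin a / N) ^ 2 := by
    simp only [sineDist, a, b]
    ring
  rw [hprod, sqrt_sq (by positivity), two_mul_sin_mul_sin]
  congr 3 <;> simp only [a, b] <;> push_cast <;> field_simp <;> ring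

theorem one_sub_sum_sqrt_sineDist_eq {N : ℕ} (hN : 2 ≤ N) :
    1 - ∑ k ∈ range (N - 1), √(sineDist N k * sineDist N (k + 1)) =
      (1 - 1 / N) * (1 - cos (π / N)) := by
  rw [sum_congr rfl fun k hk => sqrt_sineDist_mul_sineDist_succ (by simp at hk; omega),
    ← sum_div, sum_sub_distrib, sum_const, card_range, nsmul_eq_mul,
    sum_range_cos_two_pi_mul_succ_div hN, Nat.cast_sub (by omega)]
  have : (N : ℝ) ≠ 0 := by positivity
  field_simp
  ring

/-- Eq. (31) of the appendix: for every `N ≥ 1`,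
`ε_g = 1 − ∑_{k=0}^{N−2} √(g_k g_{k+1}) ≤ π²/N²`. -/
theorem epsilon_g_bound (N : ℕ) (hN : 1 ≤ N) :
    1 - ∑ k ∈ Finset.range (N - 1), Real.sqrt (sineDist N k * sineDist N (k + 1))
      ≤ Real.pi ^ 2 / (N : ℝ) ^ 2 := by
  obtain rfl | hN2 := hN.eq_or_lt
  · norm_num
    nlinarith [pi_gt_three, abs_of_pos pi_pos]
  have hN' : (2 : ℝ) ≤ N := by exact_mod_cast hN2
  have hcos : 1 - cos (π / N) ≤ π ^ 2 / (2 * N ^ 2) := by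
    have := one_sub_sq_div_two_le_cos (x := π / N)
    rw [div_pow] at this
    linarith [show π ^ 2 / N ^ 2 / 2 = π ^ 2 / (2 * N ^ 2) by ring]
  rw [one_sub_sum_sqrt_sineDist_eq hN2]
  calc (1 - 1 / (N : ℝ)) * (1 - cos (π / N))
      ≤ 1 * (1 - cos (π / N)) := by
        gcongr
        · linarith [cos_le_one (π / N)]
        · linarith [one_div_pos.2 (by linarith : (0 : ℝ) < N)]
    _ ≤ π ^ 2 / (2 * N ^ 2) := by linarith
    _ ≤ π ^ 2 / N ^ 2 := by gcongr; nlinarith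
end

section
/- Let d ≥ 2 and N ≥ 1 be integers. Then (1/d²) · ∑_{λ, λ' ∈ Λ} √(q_λ) · √(q_{λ'}) · S(λ, λ') ≥ 1 − 2π²(d−1)²/(d² N²). -/
/-- The product distribution `q_λ := ∏_{i=1}^{d−1} g_{λ_i}` on `Λ = {0,…,N−1}^{d−1}`. -/
noncomputable def prodDist (d N : ℕ) (lam : Fin (d - 1) → ℕ) : ℝ :=
  ∏ t : Fin (d - 1), sineDist N (lam t)

/-- The score matrix: `S(λ,λ') = d` if `λ = λ'`; `S(λ,λ') = 1` if the integer vector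
`λ − λ'` equals `±e_i` for some `i` or `e_i − e_j` for some `i ≠ j`; `S(λ,λ') = 0`
otherwise. -/
noncomputable def score (d : ℕ) (lam lam' : Fin (d - 1) → ℕ) : ℝ :=
  if lam = lam' then (d : ℝ)
  else if (∃ i, ∀ t, (lam t : ℤ) - (lam' t : ℤ) = if t = i then 1 else 0)
      ∨ (∃ i, ∀ t, (lam t : ℤ) - (lam' t : ℤ) = if t = i then -1 else 0)
      ∨ (∃ i j, i ≠ j ∧ ∀ t, (lam t : ℤ) - (lam' t : ℤ)
            = if t = i then 1 else if t = j then -1 else 0)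
    then 1 else 0

open Finset Real

/-!
Write `r k = √g_k`, so that `√q_λ = ∏ₜ r (λ t)`. The score counts the pairs `(a, b)` of elements
of `{∅} ∪ {1, …, d-1}` with `λ - λ' = e_a - e_b`, where `e_∅ = 0`; there are `d` pairs giving
`λ = λ'`, which is the diagonal weight `d`. For a fixed shift `δ` the bilinear sum
`∑_{λ - λ' = δ} √q_λ √q_λ'` factorises into the one-dimensional autocorrelations
`c s = ∑_{k - k' = s} r k r k'`, and `c 0 = 1`, `c (±1) = B := 1 - ε_g`. Summing over the pairs
gives the fidelity `(d + 2(d-1)B + (d-1)(d-2)B²)/d² ≥ 1 - 2(d-1)²ε_g/d²`, and product-to-sum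
formulas evaluate `B = ((N-1) cos(π/N) + 1)/N`, whence `ε_g ≤ (π/N)²/2`.
-/

section Autocorrelation

variable (r : ℕ → ℝ) (N : ℕ)

def autocorr (s : ℤ) : ℝ :=
  ∑ k ∈ range N, ∑ k' ∈ range N, if (k : ℤ) - k' = s then r k * r k' else 0

theorem autocorr_neg (s : ℤ) : autocorr r N (-s) = autocorr r N s := by
  rw [autocorr, sum_comm]
  refine sum_congr rfl fun k _ => sum_congr rfl fun k' _ => ?_
  rw [mul_comm]
  congr 1
  exact propext (by omega)

theorem autocorr_zero : autocorr r N 0 = ∑ k ∈ range N, r k ^ 2 := by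
  refine sum_congr rfl fun k hk => ?_
  simp_rw [sub_eq_zero, Nat.cast_inj]
  rw [sum_ite_eq, if_pos hk, sq]

theorem autocorr_one : autocorr r N 1 = ∑ k ∈ range (N - 1), r (k + 1) * r k := by
  have hinner : ∀ k' : ℕ, ∑ k ∈ range N, (if (k : ℤ) - k' = 1 then r k * r k' else 0)
      = if k' + 1 ∈ range N then r (k' + 1) * r k' else 0 := by
    intro k'
    simp_rw [show ∀ k : ℕ, ((k : ℤ) - k' = 1) = (k' + 1 = k) from fun k => propext (by omega)]
    exact sum_ite_eq _ _ _
  rw [autocorr, sum_comm, sum_congr rfl fun k' _ => hinner k', ← sum_filter]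
  congr 1
  ext k
  simp only [mem_filter, mem_range]
  omega

variable {ι : Type*} [Fintype ι] [DecidableEq ι]

theorem sum_piFinset_ite_sub_eq_prod_autocorr (δ : ι → ℤ) :
    ∑ lam ∈ Fintype.piFinset fun _ : ι => range N, ∑ lam' ∈ Fintype.piFinset fun _ : ι => range N,
      (if (fun t => (lam t : ℤ) - lam' t) = δ then (∏ t, r (lam t)) * ∏ t, r (lam' t) else 0)
      = ∏ t, autocorr r N (δ t) := by
  simp only [autocorr]
  rw [prod_univ_sum]
  refine sum_congr rfl fun lam _ => ?_
  rw [prod_univ_sum]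
  refine sum_congr rfl fun lam' _ => ?_
  rw [Fintype.prod_ite_zero, prod_mul_distrib]
  exact if_congr funext_iff rfl rfl

end Autocorrelation

section UnitVec

variable {ι : Type*} [DecidableEq ι]

def unitVec (a : Option ι) (t : ι) : ℤ := if some t = a then 1 else 0

theorem unitVec_apply_eq_one_iff (a : Option ι) (i : ι) : unitVec a i = 1 ↔ a = some i := by
  unfold unitVec; split_ifs <;> simp_all [eq_comm]

theorem unitVec_injective : Function.Injective (unitVec (ι := ι)) := by
  intro a b h
  ext i
  rw [← unitVec_apply_eq_one_iff, ← unitVec_apply_eq_one_iff, h]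

theorem unitVec_sub_eq_zero_iff {a b : Option ι} : unitVec a - unitVec b = 0 ↔ a = b := by
  rw [sub_eq_zero, unitVec_injective.eq_iff]

theorem unitVec_sub_apply_eq_one_iff {a b : Option ι} (hab : a ≠ b) (i : ι) :
    (unitVec a - unitVec b) i = 1 ↔ a = some i := by
  simp only [Pi.sub_apply, unitVec]
  split_ifs <;> simp_all [eq_comm]

theorem unitVec_sub_apply_eq_neg_one_iff {a b : Option ι} (hab : a ≠ b) (i : ι) :
    (unitVec a - unitVec b) i = -1 ↔ b = some i := by
  simp only [Pi.sub_apply, unitVec]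
  split_ifs <;> simp_all [eq_comm]

theorem unitVec_sub_inj {a b a' b' : Option ι} (hab : a ≠ b) (hab' : a' ≠ b')
    (h : unitVec a - unitVec b = unitVec a' - unitVec b') : a = a' ∧ b = b' := by
  constructor <;> ext i
  · rw [← unitVec_sub_apply_eq_one_iff hab, ← unitVec_sub_apply_eq_one_iff hab', h]
  · rw [← unitVec_sub_apply_eq_neg_one_iff hab, ← unitVec_sub_apply_eq_neg_one_iff hab', h]

theorem exists_eq_unitVec_sub_iff {δ : ι → ℤ} (hδ : δ ≠ 0) :
    (∃ p : Option ι × Option ι, δ = unitVec p.1 - unitVec p.2) ↔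
      (∃ i, ∀ t, δ t = if t = i then 1 else 0) ∨ (∃ i, ∀ t, δ t = if t = i then -1 else 0) ∨
        ∃ i j, i ≠ j ∧ ∀ t, δ t = if t = i then 1 else if t = j then -1 else 0 := by
  constructor
  · rintro ⟨⟨_ | i, _ | j⟩, rfl⟩
    · exact absurd (sub_self _) hδ
    · exact Or.inr (Or.inl ⟨j, fun t => by simp [unitVec, apply_ite]⟩)
    · exact Or.inl ⟨i, fun t => by simp [unitVec]⟩
    · obtain rfl | hij := eq_or_ne i j
      · exact absurd (sub_self _) hδ
      · refine Or.inr (Or.inr ⟨i, j, hij, fun t => ?_⟩)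
        rcases eq_or_ne t i with rfl | hti <;> rcases eq_or_ne t j with rfl | htj <;>
          simp_all [unitVec]
  · rintro (⟨i, h⟩ | ⟨i, h⟩ | ⟨i, j, hij, h⟩)
    · exact ⟨(some i, none), funext fun t => by simp [h, unitVec]⟩
    · exact ⟨(none, some i), funext fun t => by simp [h, unitVec, apply_ite]⟩
    · refine ⟨(some i, some j), funext fun t => ?_⟩
      rcases eq_or_ne t i with rfl | hti
      · simp [h, unitVec, hij]
      · rcases eq_or_ne t j with rfl | htj <;> simp [unitVec, *]

variable [Fintype ι]

theorem card_filter_eq_unitVec_sub_of_ne_zero {δ : ι → ℤ} (hδ : δ ≠ 0) :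
    #{p : Option ι × Option ι | δ = unitVec p.1 - unitVec p.2}
      = if ∃ p : Option ι × Option ι, δ = unitVec p.1 - unitVec p.2 then 1 else 0 := by
  split_ifs with h
  · obtain ⟨p, hp⟩ := h
    refine card_eq_one.2 ⟨p, eq_singleton_iff_unique_mem.2 ⟨by simpa using hp, fun q hq => ?_⟩⟩
    rw [mem_filter] at hq
    have hne : ∀ {a b : Option ι}, δ = unitVec a - unitVec b → a ≠ b := fun hδab hab =>
      hδ (hδab.trans (unitVec_sub_eq_zero_iff.2 hab))
    obtain ⟨h1, h2⟩ := unitVec_sub_inj (hne hq.2) (hne hp) (hq.2.symm.trans hp)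
    exact Prod.ext h1 h2
  · exact card_eq_zero.2 (filter_eq_empty_iff.2 fun p _ hp => h ⟨p, hp⟩)

theorem card_filter_zero_eq_unitVec_sub :
    #{p : Option ι × Option ι | (0 : ι → ℤ) = unitVec p.1 - unitVec p.2}
      = Fintype.card ι + 1 := by
  have hdiag : ({p : Option ι × Option ι | p.1 = p.2} : Finset _) = univ.diag := by
    ext; simp [mem_diag]
  rw [filter_congr fun p _ => eq_comm.trans unitVec_sub_eq_zero_iff, hdiag, diag_card]
  simp

variable {c : ℤ → ℝ}

theorem prod_comp_unitVec (h0 : c 0 = 1) (a : Option ι) :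
    ∏ t, c (unitVec a t) = a.elim 1 fun _ => c 1 := by
  rcases a with _ | i
  · simp [unitVec, h0]
  · simp [unitVec, apply_ite c, h0]

theorem prod_comp_unitVec_sub (h0 : c 0 = 1) (hneg : c (-1) = c 1) {a b : Option ι}
    (hab : a ≠ b) :
    ∏ t, c ((unitVec a - unitVec b) t) = (∏ t, c (unitVec a t)) * ∏ t, c (unitVec b t) := by
  rw [← prod_mul_distrib]
  refine prod_congr rfl fun t _ => ?_
  simp only [Pi.sub_apply, unitVec]
  split_ifs <;> simp_all

theorem sum_prod_comp_unitVec_sub (h0 : c 0 = 1) (hneg : c (-1) = c 1) :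
    ∑ p : Option ι × Option ι, ∏ t, c ((unitVec p.1 - unitVec p.2) t)
      = (Fintype.card ι + 1) + 2 * Fintype.card ι * c 1
        + Fintype.card ι * (Fintype.card ι - 1) * c 1 ^ 2 := by
  set f : Option ι → ℝ := fun a => ∏ t, c (unitVec a t) with hf
  have hpair : ∀ a b : Option ι, ∏ t, c ((unitVec a - unitVec b) t)
      = f a * f b + if a = b then 1 - f a * f b else 0 := by
    intro a b
    obtain rfl | hab := eq_or_ne a b
    · simp [h0]
    · rw [prod_comp_unitVec_sub h0 hneg hab, if_neg hab, add_zero]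
  calc ∑ p : Option ι × Option ι, ∏ t, c ((unitVec p.1 - unitVec p.2) t)
      = (∑ a, f a) ^ 2 + ∑ a, (1 - f a * f a) := by
        simp only [Fintype.sum_prod_type, hpair, sum_add_distrib, sum_ite_eq, mem_univ, if_true,
          sum_mul_sum, sq]
    _ = _ := by
        simp only [hf, prod_comp_unitVec h0, Fintype.sum_option, Option.elim, sum_const,
          card_univ, Fintype.card_option, nsmul_eq_mul, sum_sub_distrib]
        push_cast
        ring

end UnitVec

theorem sineDist_nonneg (N k : ℕ) : 0 ≤ sineDist N k := by
  unfold sineDist; positivity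

theorem sum_range_cos_add_two_pi_mul_div {N : ℕ} (hN : 2 ≤ N) (φ : ℝ) :
    ∑ k ∈ range N, cos (φ + 2 * π * k / N) = 0 := by
  have hζ := Complex.isPrimitiveRoot_exp N (by omega)
  have h := congrArg (fun z => (Complex.exp (φ * Complex.I) * z).re)
    (hζ.geom_sum_eq_zero (by omega))
  simp only [mul_zero, Complex.zero_re, mul_sum, ← Complex.exp_nat_mul, ← Complex.exp_add,
    Complex.re_sum] at h
  rw [← h]
  refine sum_congr rfl fun k _ => ?_
  rw [← Complex.exp_ofReal_mul_I_re]
  congr 2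
  push_cast
  ring

theorem sum_sineDist {N : ℕ} (hN : 2 ≤ N) : ∑ k ∈ range N, sineDist N k = 1 := by
  have hN0 : (N : ℝ) ≠ 0 := by positivity
  have hg : ∀ k : ℕ, sineDist N k = (1 - cos (π / N + 2 * π * k / N)) / N := by
    intro k
    rw [sineDist, sin_sq_eq_half_sub]
    field_simp
    ring_nf
  simp_rw [hg, ← sum_div, sum_sub_distrib, sum_range_cos_add_two_pi_mul_div hN]
  simp [hN0]

theorem sqrt_sineDist {N k : ℕ} (hk : k < N) :
    √(sineDist N k) = √(2 / N) * sin (π * (2 * k + 1) / (2 * N)) := by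
  have hk' : (2 * k + 1 : ℝ) ≤ 2 * N := by norm_cast; omega
  have hθ : π * (2 * k + 1) / (2 * N) ≤ π := by
    rw [div_le_iff₀ (by linarith)]
    nlinarith [pi_pos]
  rw [sineDist, sqrt_mul (by positivity),
    sqrt_sq (sin_nonneg_of_nonneg_of_le_pi (by positivity) hθ)]

theorem sum_sqrt_sineDist_succ_mul {N : ℕ} (hN : 2 ≤ N) :
    ∑ k ∈ range (N - 1), √(sineDist N (k + 1)) * √(sineDist N k)
      = ((N - 1) * cos (π / N) + 1) / N := by
  have hterm : ∀ k ∈ range (N - 1), √(sineDist N (k + 1)) * √(sineDist N k)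
      = (cos (π / N) - cos (0 + 2 * π * (k + 1 : ℕ) / N)) / N := by
    intro k hk
    rw [mem_range] at hk
    have hsum : (π / N + (0 + 2 * π * (k + 1 : ℕ) / N)) / 2
        = π * (2 * (k + 1 : ℕ) + 1) / (2 * N) := by
      field_simp; ring
    have hdiff : (π / N - (0 + 2 * π * (k + 1 : ℕ) / N)) / 2 = -(π * (2 * k + 1) / (2 * N)) := by
      push_cast; field_simp; ring
    have hsq : √(2 / N) ^ 2 = 2 / N := sq_sqrt (by positivity)
    rw [sqrt_sineDist (by omega), sqrt_sineDist (by omega), cos_sub_cos, hsum, hdiff, sin_neg]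
    linear_combination
      (sin (π * (2 * (k + 1 : ℕ) + 1) / (2 * N)) * sin (π * (2 * k + 1) / (2 * N))) * hsq
  have hcos := sum_range_succ' (fun k => cos (0 + 2 * π * k / N)) (N - 1)
  rw [Nat.sub_add_cancel (by omega), sum_range_cos_add_two_pi_mul_div hN] at hcos
  rw [sum_congr rfl hterm, ← sum_div, sum_sub_distrib, sum_const, card_range, nsmul_eq_mul,
    Nat.cast_sub (by omega)]
  simp only [Nat.cast_zero, mul_zero, zero_div, add_zero, cos_zero] at hcos
  rw [eq_neg_of_add_eq_zero_left hcos.symm]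
  push_cast
  ring

theorem one_sub_sum_sqrt_sineDist_succ_mul_le {N : ℕ} (hN : 2 ≤ N) :
    1 - ∑ k ∈ range (N - 1), √(sineDist N (k + 1)) * √(sineDist N k) ≤ (π / N) ^ 2 / 2 := by
  rw [sum_sqrt_sineDist_succ_mul hN]
  have hcos : 0 ≤ 1 - cos (π / N) := sub_nonneg.2 (cos_le_one _)
  calc 1 - ((N - 1) * cos (π / N) + 1) / N = (1 - 1 / N) * (1 - cos (π / N)) := by
        field_simp; ring
    _ ≤ 1 - cos (π / N) := mul_le_of_le_one_left hcos (by simp)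
    _ ≤ (π / N) ^ 2 / 2 := by linarith [one_sub_sq_div_two_le_cos (x := π / N)]

theorem score_eq_card {d : ℕ} (hd : 1 ≤ d) (lam lam' : Fin (d - 1) → ℕ) :
    score d lam lam' = #{p : Option (Fin (d - 1)) × Option (Fin (d - 1)) |
      (fun t => (lam t : ℤ) - lam' t) = unitVec p.1 - unitVec p.2} := by
  by_cases h : lam = lam'
  · subst h
    have h0 : (fun t => (lam t : ℤ) - lam t) = 0 := funext fun t => sub_self _
    rw [score, if_pos rfl, h0, card_filter_zero_eq_unitVec_sub, Fintype.card_fin]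
    push_cast [hd]
    ring
  · have hδ : (fun t => (lam t : ℤ) - lam' t) ≠ 0 := fun h0 =>
      h (funext fun t => by have := congrFun h0 t; simp at this; omega)
    have key := exists_eq_unitVec_sub_iff hδ
    rw [score, if_neg h, card_filter_eq_unitVec_sub_of_ne_zero hδ, if_congr key.symm rfl rfl]
    push_cast
    rfl

theorem sum_sqrt_prodDist_mul_score {d : ℕ} (hd : 1 ≤ d) (N : ℕ) :
    ∑ lam ∈ Fintype.piFinset fun _ : Fin (d - 1) => range N,
      ∑ lam' ∈ Fintype.piFinset fun _ : Fin (d - 1) => range N,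
        √(prodDist d N lam) * √(prodDist d N lam') * score d lam lam'
      = ∑ p : Option (Fin (d - 1)) × Option (Fin (d - 1)),
          ∏ t, autocorr (fun k => √(sineDist N k)) N ((unitVec p.1 - unitVec p.2) t) := by
  have hsqrt : ∀ lam : Fin (d - 1) → ℕ, √(prodDist d N lam) = ∏ t, √(sineDist N (lam t)) :=
    fun lam => sqrt_prod _ fun t _ => sineDist_nonneg N (lam t)
  simp_rw [hsqrt, score_eq_card hd, card_filter]
  push_cast
  simp_rw [mul_sum, mul_boole]
  rw [sum_congr rfl fun lam _ => sum_comm, sum_comm]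
  exact sum_congr rfl fun p _ =>
    sum_piFinset_ite_sub_eq_prod_autocorr (fun k => √(sineDist N k)) N _

theorem sq_sub_le_of_one_sub_le {m B ε : ℝ} (hm : 1 ≤ m) (hB : 1 - B ≤ ε) :
    (m + 1) ^ 2 - 2 * m ^ 2 * ε ≤ m + 1 + 2 * m * B + m * (m - 1) * B ^ 2 := by
  -- the difference of the two sides is `2m²(ε - x) + m(m - 1)x²` with `x = 1 - B`
  nlinarith [mul_le_mul_of_nonneg_left hB (sq_nonneg m),
    mul_nonneg (by nlinarith : 0 ≤ m * (m - 1)) (sq_nonneg (1 - B))]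

/-- Lemma 3 of the appendix: the entanglement fidelity `(1/d²) q^T S q` of the covariant
gate-estimation protocol specified by the product distribution `q` is at least
`1 − 2π²(d−1)²/(d²N²)`. -/
theorem entanglement_fidelity_bound (d N : ℕ) (hd : 2 ≤ d) (hN : 1 ≤ N) :
    1 - 2 * Real.pi ^ 2 * ((d : ℝ) - 1) ^ 2 / ((d : ℝ) ^ 2 * (N : ℝ) ^ 2)
    ≤ (1 / (d : ℝ) ^ 2) *
      ∑ lam ∈ Fintype.piFinset fun _ : Fin (d - 1) => Finset.range N,
        ∑ lam' ∈ Fintype.piFinset fun _ : Fin (d - 1) => Finset.range N,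
          Real.sqrt (prodDist d N lam) * Real.sqrt (prodDist d N lam') * score d lam lam' := by
  have hd1 : 1 ≤ d := by omega
  have hd2 : (2 : ℝ) ≤ d := by exact_mod_cast hd
  obtain rfl | hN2 : N = 1 ∨ 2 ≤ N := by omega
  -- `g_0 = 2` is not normalised when `N = 1`, but then the bound is negative.
  · refine le_trans ?_ (mul_nonneg (by positivity)
      (sum_nonneg fun lam _ => sum_nonneg fun lam' _ => ?_))
    · rw [sub_nonpos, le_div_iff₀ (by positivity)]
      have hd' : (d : ℝ) ^ 2 ≤ 4 * ((d : ℝ) - 1) ^ 2 := by nlinarith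
      have hπ : 9 < π ^ 2 := by nlinarith [pi_gt_three]
      push_cast
      nlinarith
    · rw [score_eq_card hd1]
      positivity
  · have h0 : autocorr (fun k => √(sineDist N k)) N 0 = 1 := by
      simp only [autocorr_zero, sq_sqrt (sineDist_nonneg N _), sum_sineDist hN2]
    have hB := one_sub_sum_sqrt_sineDist_succ_mul_le hN2
    rw [sum_sqrt_prodDist_mul_score hd1, sum_prod_comp_unitVec_sub h0 (autocorr_neg _ N 1),
      autocorr_one, Fintype.card_fin, Nat.cast_sub hd1, Nat.cast_one]
    calc _ ≤ (((d : ℝ) - 1 + 1) ^ 2 - 2 * ((d : ℝ) - 1) ^ 2 * ((π / N) ^ 2 / 2)) / d ^ 2 := by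
          rw [le_div_iff₀ (by positivity)]
          field_simp
          nlinarith [sq_nonneg (((d : ℝ) - 1) * π)]
      _ ≤ _ := by
          rw [one_div_mul_eq_div]
          gcongr
          exact sq_sub_le_of_one_sub_le (m := (d : ℝ) - 1) (by linarith) hB
end

section
/- Let M ≥ 1 be an integer and let θ̂_0, …, θ̂_{M−1} be arbitrary real numbers. Then there exists θ ∈ [0, 2π) such that for every k ∈ {0,…,M−1}, |sin((θ − θ̂_k)/2)| ≥ sin(π/(2M)). -/
open Real Finset

private lemma abs_sin_add_int_mul_pi (x : ℝ) (n : ℤ) : |Real.sin (x + n * Real.pi)| = |Real.sin x| := by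
  rw [Real.sin_add_int_mul_pi]
  rcases Int.even_or_odd n with h | h
  · rw [h.neg_one_zpow, one_mul]
  · rw [h.neg_one_zpow, neg_one_mul, abs_neg]

private lemma sin_ge_of_mem (m x : ℝ) (hm0 : 0 ≤ m) (hm : m ≤ Real.pi / 2)
    (h1 : m ≤ x) (h2 : x ≤ Real.pi - m) : Real.sin m ≤ Real.sin x := by
  have hπ := Real.pi_pos
  rcases le_or_gt x (Real.pi / 2) with hx | hx
  · exact Real.strictMonoOn_sin.monotoneOn ⟨by linarith, hm⟩ ⟨by linarith, hx⟩ h1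
  · rw [← Real.sin_pi_sub x]
    exact Real.strictMonoOn_sin.monotoneOn ⟨by linarith, hm⟩ ⟨by linarith, by linarith⟩
      (by linarith)

/-- Lower bound for classical programming of phase gates: for any `M` fixed phases
`θ̂_0, …, θ̂_{M−1}`, there exists `θ ∈ [0, 2π)` with
`|sin((θ − θ̂_k)/2)| ≥ sin(π/(2M))` for every `k`. -/
theorem classical_program_lower_bound (M : ℕ) (hM : 1 ≤ M) (θhat : Fin M → ℝ) :
    ∃ θ ∈ Set.Ico (0 : ℝ) (2 * Real.pi),
      ∀ k : Fin M, Real.sin (Real.pi / (2 * M)) ≤ |Real.sin ((θ - θhat k) / 2)| := by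
  have hπ := Real.pi_pos
  have hM0 : 0 < M := hM
  have hMR : (0:ℝ) < M := by exact_mod_cast hM0
  have hπM : 0 < Real.pi / M := div_pos hπ hMR
  obtain ⟨T, hT⟩ : ∃ T : ℝ, T = 2 * Real.pi := ⟨_, rfl⟩
  have hT0 : 0 < T := by rw [hT]; positivity
  -- reduced phases in [0, T)
  obtain ⟨φ, hφ0, hφT, hφ_diff⟩ :
      ∃ φ : Fin M → ℝ, (∀ k, 0 ≤ φ k) ∧ (∀ k, φ k < T) ∧
        ∀ k, ∃ n : ℤ, θhat k = φ k + (n : ℝ) * T := by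
    refine ⟨fun k => Int.fract (θhat k / T) * T, ?_, ?_, ?_⟩
    · exact fun k => mul_nonneg (Int.fract_nonneg _) hT0.le
    · intro k
      calc Int.fract (θhat k / T) * T < 1 * T :=
            mul_lt_mul_of_pos_right (Int.fract_lt_one _) hT0
        _ = T := one_mul T
    · intro k
      refine ⟨⌊θhat k / T⌋, ?_⟩
      show θhat k = Int.fract (θhat k / T) * T + (⌊θhat k / T⌋ : ℝ) * T
      have h : Int.fract (θhat k / T) = θhat k / T - ⌊θhat k / T⌋ := rfl
      rw [h, sub_mul, div_mul_cancel₀ _ hT0.ne']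
      ring
  -- sorted version
  obtain ⟨ψ, hmono, hψval, hψφ⟩ :
      ∃ ψ : Fin M → ℝ, Monotone ψ ∧ (∀ j, ∃ k, ψ j = φ k) ∧ (∀ k, ∃ j, φ k = ψ j) := by
    refine ⟨φ ∘ Tuple.sort φ, Tuple.monotone_sort φ,
      fun j => ⟨Tuple.sort φ j, rfl⟩, fun k => ⟨(Tuple.sort φ).symm k, ?_⟩⟩
    simp
  have hψ0 : ∀ j, 0 ≤ ψ j := by
    intro j; obtain ⟨k, hk⟩ := hψval j; rw [hk]; exact hφ0 k
  have hψT : ∀ j, ψ j < T := by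
    intro j; obtain ⟨k, hk⟩ := hψval j; rw [hk]; exact hφT k
  -- extended sorted sequence
  obtain ⟨F, hFlt, hFM⟩ :
      ∃ F : ℕ → ℝ, (∀ j (h : j < M), F j = ψ ⟨j, h⟩) ∧ F M = ψ ⟨0, hM0⟩ + T := by
    refine ⟨fun j => if h : j < M then ψ ⟨j, h⟩ else ψ ⟨0, hM0⟩ + T, ?_, ?_⟩
    · intro j h; simp [h]
    · simp
  have hF0 : F 0 = ψ ⟨0, hM0⟩ := hFlt 0 hM0
  have hFsum : ∑ j ∈ Finset.range M, (F (j+1) - F j) = T := by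
    rw [Finset.sum_range_sub, hFM, hF0]; ring
  -- a large gap exists
  obtain ⟨i, hi, hgap⟩ : ∃ i ∈ Finset.range M, T / M ≤ F (i+1) - F i := by
    apply Finset.exists_le_of_sum_le ⟨0, Finset.mem_range.2 hM0⟩
    rw [hFsum, Finset.sum_const, Finset.card_range, nsmul_eq_mul]
    rw [mul_div_cancel₀ _ (ne_of_gt hMR)]
  rw [Finset.mem_range] at hi
  have hgap' : Real.pi / M ≤ (F (i+1) - F i) / 2 := by
    have h2 : T / M = 2 * (Real.pi / M) := by rw [hT]; ring
    linarith [hgap, h2 ▸ hgap]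
  have hFi : F i = ψ ⟨i, hi⟩ := hFlt i hi
  have hFi0 : 0 ≤ F i := hFi ▸ hψ0 _
  have hFiT : F i < T := hFi ▸ hψT _
  have hFi1T : F (i+1) ≤ 2 * T := by
    by_cases h : i + 1 < M
    · rw [hFlt _ h]; linarith [hψT ⟨i+1, h⟩]
    · have h1 : i + 1 = M := by omega
      rw [h1, hFM]; linarith [hψT ⟨0, hM0⟩]
  have hFi10 : 0 ≤ F (i+1) := by
    by_cases h : i + 1 < M
    · rw [hFlt _ h]; exact hψ0 _
    · have h1 : i + 1 = M := by omega
      rw [h1, hFM]; linarith [hψ0 ⟨0, hM0⟩]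
  -- every φ k avoids the open gap (F i, F (i+1)) mod T
  have hkey : ∀ k : Fin M, (F (i+1) - T ≤ φ k ∧ φ k ≤ F i) ∨
      (F (i+1) ≤ φ k ∧ φ k ≤ F i + T) := by
    intro k
    obtain ⟨j, hj⟩ := hψφ k
    rcases le_or_gt (j : ℕ) i with hji | hji
    · left
      constructor
      · by_cases h : i + 1 < M
        · rw [hFlt _ h, hj]; linarith [hψT (⟨i+1, h⟩ : Fin M), hψ0 j]
        · have h1 : i + 1 = M := by omega
          rw [h1, hFM, hj]
          have : ψ ⟨0, hM0⟩ ≤ ψ j := hmono (by simp [Fin.le_def])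
          linarith
      · rw [hj, hFi]
        exact hmono (by simpa [Fin.le_def] using hji)
    · right
      have h1 : i + 1 < M := lt_of_le_of_lt hji j.isLt
      constructor
      · rw [hFlt _ h1, hj]
        exact hmono (by simpa [Fin.le_def] using hji)
      · rw [hj]; linarith [hψT j]
  -- candidate point
  obtain ⟨θ0, hθ0⟩ : ∃ θ0 : ℝ, θ0 = (F i + F (i+1)) / 2 := ⟨_, rfl⟩
  have hθ00 : 0 ≤ θ0 := by rw [hθ0]; positivity
  have hθ02 : θ0 < 2 * T := by rw [hθ0]; linarith
  obtain ⟨θ, c, hθc, hθmem⟩ :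
      ∃ θ : ℝ, ∃ c : ℤ, θ = θ0 + (c : ℝ) * T ∧ θ ∈ Set.Ico (0:ℝ) T := by
    rcases lt_or_ge θ0 T with h | h
    · exact ⟨θ0, 0, by push_cast; ring, hθ00, h⟩
    · exact ⟨θ0 - T, -1, by push_cast; ring, by constructor <;> linarith⟩
  refine ⟨θ, by rw [← hT]; exact hθmem, ?_⟩
  intro k
  obtain ⟨m, hm⟩ := hφ_diff k
  -- rewrite the argument modulo π
  have hrepr : (θ - θhat k) / 2 = (θ0 - φ k) / 2 + ((c - m : ℤ) : ℝ) * Real.pi := by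
    rw [hθc, hm, hT]
    push_cast
    ring
  rw [hrepr, abs_sin_add_int_mul_pi]
  -- bound |θ0 - φ k|
  have habs1 : Real.pi / M ≤ |θ0 - φ k| := by
    rcases hkey k with ⟨h1, h2⟩ | ⟨h1, h2⟩
    · rw [abs_of_nonneg (by rw [hθ0]; linarith)]
      rw [hθ0]; linarith
    · rw [abs_of_nonpos (by rw [hθ0]; linarith), neg_sub]
      rw [hθ0]; linarith
  have habs2 : |θ0 - φ k| ≤ 2 * Real.pi - Real.pi / M := by
    rw [hT] at hFiT hFi1T
    rcases hkey k with ⟨h1, h2⟩ | ⟨h1, h2⟩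
    · rw [abs_of_nonneg (by rw [hθ0]; linarith)]
      rw [hT] at h1; rw [hθ0]; linarith
    · rw [abs_of_nonpos (by rw [hθ0]; linarith), neg_sub]
      rw [hT] at h2; rw [hθ0]; linarith
  -- conclude via monotonicity of sin
  have hm2 : Real.pi / (2 * M) ≤ Real.pi / 2 := by
    apply div_le_div_of_nonneg_left hπ.le (by linarith)
    have : (1:ℝ) ≤ M := by exact_mod_cast hM
    linarith
  have hm0 : 0 < Real.pi / (2 * M) := by positivity
  have heq : |Real.sin ((θ0 - φ k) / 2)| = Real.sin (|θ0 - φ k| / 2) := by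
    rcases abs_cases (θ0 - φ k) with ⟨h, hs⟩ | ⟨h, hs⟩
    · rw [h, abs_of_nonneg]
      apply Real.sin_nonneg_of_nonneg_of_le_pi
      · positivity
      · rw [← h]; linarith
    · have hsin : Real.sin ((θ0 - φ k) / 2) ≤ 0 := by
        apply Real.sin_nonpos_of_nonpos_of_neg_pi_le
        · linarith
        · have h' : θ0 - φ k = -|θ0 - φ k| := by rw [h]; ring
          linarith [h' ▸ habs2]
      rw [h, neg_div, Real.sin_neg, abs_of_nonpos hsin]
  rw [heq]
  apply sin_ge_of_mem _ _ hm0.le hm2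
  · have h3 : Real.pi / (2 * M) = (Real.pi / M) / 2 := by ring
    rw [h3]; linarith
  · have h3 : Real.pi - Real.pi / (2 * M) = (2 * Real.pi - Real.pi / M) / 2 := by ring
    rw [h3]; linarith
end
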